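/- Let Φ be a Hausdorff topological space with a bornology 𝔹 stable under inclusions, and let S(t) be a semigroup with each S(t) continuous, possessing a compact attracting set 𝓑 that itself belongs to 𝔹. Then the attractor 𝓐 satisfies the representation formula 𝓐 = { u(0) : u is a complete bounded trajectory }, where a complete bounded trajectory is a map u : ℝ → Φ with S(t)u(h) = u(t+h) for all t ≥ 0, h ∈ ℝ, and whose range {u(t) : t ∈ ℝ} belongs to 𝔹. -/

import Mathlib

/-! By continuity `S(t)𝓐` is again a compact attracting set, so minimality gives `𝓐 ⊆ S(t)𝓐`.
Conversely `S(t)𝓐 ⊆ 𝓐`: writing `a = S(T)b` with `b ∈ 𝓐 ⊆ 𝓑`, the point `S(t)a = S(t + T)b` lies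
in `S(t + T)𝓑` for arbitrarily large `T`, hence in every neighbourhood of `𝓐`, hence in `𝓐` (points
are closed). Iterating `𝓐 ⊆ S(1)𝓐` gives a backward orbit `x = x₀, x₁, x₂, …` in `𝓐`, and
`u(t) = S(t + n)xₙ`, independent of the choice of `n ≥ -t`, is a complete trajectory with range in
`𝓐 ⊆ 𝓑`, hence bounded. Conversely, `u(0) = S(T)u(-T)` lies in `S(T)` of the bounded set `range u`
for every `T ≥ 0`, so it lies in `𝓐` by the same argument. -/

open Set Filter Topology

/-- The ω-limit set of `B` under the semigroup `S`:
`ω(B) = ⋂_{T ≥ 0} closure (⋃_{t ≥ T} S(t)B)`. -/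
def omegaLimitSet {Φ : Type*} [TopologicalSpace Φ] (S : ℝ → Φ → Φ) (B : Set Φ) : Set Φ :=
  ⋂ T ∈ Ici (0 : ℝ), closure (⋃ t ∈ Ici T, S t '' B)

/-- `K` attracts `B` under the semigroup `S`: for every open neighbourhood `O` of `K`
there is `T ≥ 0` with `S(t)B ⊆ O` for all `t ≥ T`. -/
def Attracts {Φ : Type*} [TopologicalSpace Φ] (S : ℝ → Φ → Φ) (K B : Set Φ) : Prop :=
  ∀ O : Set Φ, IsOpen O → K ⊆ O → ∃ T : ℝ, 0 ≤ T ∧ ∀ t ≥ T, S t '' B ⊆ O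

namespace Attracts

variable {Φ : Type*} [TopologicalSpace Φ] {S : ℝ → Φ → Φ} {K B : Set Φ}

theorem image (hSadd : ∀ t s : ℝ, 0 ≤ t → 0 ≤ s → S (t + s) = S t ∘ S s) {t : ℝ} (ht : 0 ≤ t)
    (hSt : Continuous (S t)) (h : Attracts S K B) : Attracts S (S t '' K) B := by
  intro O hO hKO
  obtain ⟨T, hT0, hT⟩ := h _ (hO.preimage hSt) (image_subset_iff.mp hKO)
  refine ⟨T + t, by linarith, fun r hr => ?_⟩
  rw [show r = t + (r - t) by ring, hSadd t (r - t) ht (by linarith), image_comp,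
    image_subset_iff]
  exact hT (r - t) (by linarith)

theorem mem_of_frequently_mem_image [T1Space Φ] (h : Attracts S K B) {x : Φ}
    (hx : ∃ᶠ t in atTop, x ∈ S t '' B) : x ∈ K := by
  by_contra hxK
  obtain ⟨T, -, hT⟩ := h {x}ᶜ isOpen_compl_singleton (subset_compl_singleton_iff.mpr hxK)
  obtain ⟨t, hxt, htT⟩ := (hx.and_eventually (eventually_ge_atTop T)).exists
  exact hT t htT hxt rfl

end Attracts

section Invariance

variable {Φ : Type*} [TopologicalSpace Φ] {S : ℝ → Φ → Φ} {A : Set Φ}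

theorem subset_image_of_isMinimal_attracting (𝔹 : Set (Set Φ))
    (hSadd : ∀ t s : ℝ, 0 ≤ t → 0 ≤ s → S (t + s) = S t ∘ S s)
    (hcont : ∀ t : ℝ, 0 ≤ t → Continuous (S t)) (hAc : IsCompact A)
    (hAattr : ∀ B ∈ 𝔹, Attracts S A B)
    (hAmin : ∀ K : Set Φ, IsCompact K → (∀ B ∈ 𝔹, Attracts S K B) → A ⊆ K)
    {t : ℝ} (ht : 0 ≤ t) : A ⊆ S t '' A :=
  hAmin _ (hAc.image (hcont t ht)) fun B hB => (hAattr B hB).image hSadd ht (hcont t ht)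

theorem image_subset_of_subset_image [T1Space Φ] {B : Set Φ}
    (hSadd : ∀ t s : ℝ, 0 ≤ t → 0 ≤ s → S (t + s) = S t ∘ S s)
    (hback : ∀ t : ℝ, 0 ≤ t → A ⊆ S t '' A) (hAB : A ⊆ B) (hattr : Attracts S A B)
    {t : ℝ} (ht : 0 ≤ t) : S t '' A ⊆ A := by
  rintro _ ⟨a, ha, rfl⟩
  refine hattr.mem_of_frequently_mem_image (frequently_atTop.mpr fun T => ?_)
  obtain ⟨b, hb, rfl⟩ := hback (max T 0) (le_max_right T 0) ha
  refine ⟨t + max T 0, by linarith [le_max_left T 0], b, hAB hb, ?_⟩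
  rw [hSadd t _ ht (le_max_right T 0), Function.comp_apply]

end Invariance

section Trajectories

variable {Φ : Type*} {S : ℝ → Φ → Φ}

def IsCompleteTrajectory (S : ℝ → Φ → Φ) (u : ℝ → Φ) : Prop :=
  ∀ t : ℝ, 0 ≤ t → ∀ h : ℝ, S t (u h) = u (t + h)

theorem IsCompleteTrajectory.apply_zero_mem_image {u : ℝ → Φ} (hu : IsCompleteTrajectory S u)
    {t : ℝ} (ht : 0 ≤ t) : u 0 ∈ S t '' range u :=
  ⟨u (-t), mem_range_self _, by rw [hu t ht, add_neg_cancel]⟩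

theorem exists_backward_orbit {A : Set Φ} (hA : A ⊆ S 1 '' A) {x : Φ} (hx : x ∈ A) :
    ∃ xs : ℕ → Φ, xs 0 = x ∧ (∀ n, xs n ∈ A) ∧ ∀ n, S 1 (xs (n + 1)) = xs n := by
  choose! pre hpreA hpre using fun y (hy : y ∈ A) => hA hy
  have hmem : ∀ n, pre^[n] x ∈ A := fun n => MapsTo.iterate hpreA n hx
  refine ⟨fun n => pre^[n] x, rfl, hmem, fun n => ?_⟩
  simp only [Function.iterate_succ_apply']
  exact hpre _ (hmem n)

noncomputable def trajectoryOfBackwardOrbit (S : ℝ → Φ → Φ) (xs : ℕ → Φ) (t : ℝ) : Φ :=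
  S (t + ⌈-t⌉₊) (xs ⌈-t⌉₊)

theorem trajectoryOfBackwardOrbit_zero (hS0 : S 0 = id) (xs : ℕ → Φ) :
    trajectoryOfBackwardOrbit S xs 0 = xs 0 := by
  simp [trajectoryOfBackwardOrbit, hS0]

theorem range_trajectoryOfBackwardOrbit_subset {A : Set Φ} {xs : ℕ → Φ}
    (hfwd : ∀ t : ℝ, 0 ≤ t → S t '' A ⊆ A) (hxs : ∀ n, xs n ∈ A) :
    range (trajectoryOfBackwardOrbit S xs) ⊆ A := by
  rintro _ ⟨t, rfl⟩
  exact hfwd _ (by linarith [Nat.le_ceil (-t)]) (mem_image_of_mem _ (hxs _))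

variable {xs : ℕ → Φ} (hSadd : ∀ t s : ℝ, 0 ≤ t → 0 ≤ s → S (t + s) = S t ∘ S s)
  (hxs : ∀ n, S 1 (xs (n + 1)) = xs n)
include hSadd hxs

theorem apply_backwardOrbit_add {s : ℝ} {n : ℕ} (hs : 0 ≤ s + n) (k : ℕ) :
    S (s + ↑(n + k)) (xs (n + k)) = S (s + n) (xs n) := by
  induction k with
  | zero => simp
  | succ k ih =>
    have hk : 0 ≤ s + ↑(n + k) := by push_cast; linarith [k.cast_nonneg (α := ℝ)]
    calc S (s + ↑(n + (k + 1))) (xs (n + k + 1))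
        = S (s + ↑(n + k)) (S 1 (xs (n + k + 1))) := by
          rw [← Function.comp_apply (f := S _) (g := S 1), ← hSadd _ 1 hk zero_le_one]
          push_cast; ring_nf
      _ = S (s + n) (xs n) := by rw [hxs, ih]

theorem trajectoryOfBackwardOrbit_eq {t : ℝ} {n : ℕ} (hn : 0 ≤ t + n) :
    trajectoryOfBackwardOrbit S xs t = S (t + n) (xs n) := by
  obtain ⟨k, rfl⟩ := Nat.exists_eq_add_of_le (Nat.ceil_le.mpr (by linarith) : ⌈-t⌉₊ ≤ n)
  exact (apply_backwardOrbit_add hSadd hxs (by linarith [Nat.le_ceil (-t)]) k).symm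

theorem isCompleteTrajectory_trajectoryOfBackwardOrbit :
    IsCompleteTrajectory S (trajectoryOfBackwardOrbit S xs) := by
  intro t ht h
  have hh : 0 ≤ h + ⌈-h⌉₊ := by linarith [Nat.le_ceil (-h)]
  rw [trajectoryOfBackwardOrbit_eq hSadd hxs (t := t + h) (n := ⌈-h⌉₊) (by linarith), add_assoc,
    hSadd t _ ht hh, Function.comp_apply, trajectoryOfBackwardOrbit]

end Trajectories

theorem stmt_6_general {Φ : Type*} [TopologicalSpace Φ] [T2Space Φ]
    (S : ℝ → Φ → Φ)
    (hS0 : S 0 = id)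
    (hSadd : ∀ t s : ℝ, 0 ≤ t → 0 ≤ s → S (t + s) = S t ∘ S s)
    (hcont : ∀ t : ℝ, 0 ≤ t → Continuous (S t))
    (𝔹 : Set (Set Φ))
    (h𝔹incl : ∀ B ∈ 𝔹, ∀ B₁ : Set Φ, B₁ ⊆ B → B₁.Nonempty → B₁ ∈ 𝔹)
    (𝓑 : Set Φ) (h𝓑 : IsCompact 𝓑) (h𝓑mem : 𝓑 ∈ 𝔹)
    (hattr : ∀ B ∈ 𝔹, Attracts S 𝓑 B)
    (𝓐 : Set Φ)
    (h𝓐c : IsCompact 𝓐)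
    (h𝓐attr : ∀ B ∈ 𝔹, Attracts S 𝓐 B)
    (h𝓐min : ∀ K : Set Φ, IsCompact K → (∀ B ∈ 𝔹, Attracts S K B) → 𝓐 ⊆ K) :
    𝓐 = {x : Φ | ∃ u : ℝ → Φ,
      (∀ t : ℝ, 0 ≤ t → ∀ h : ℝ, S t (u h) = u (t + h)) ∧
      Set.range u ∈ 𝔹 ∧ u 0 = x} := by
  have h𝓐𝓑 : 𝓐 ⊆ 𝓑 := h𝓐min 𝓑 h𝓑 hattr
  have hback : ∀ t : ℝ, 0 ≤ t → 𝓐 ⊆ S t '' 𝓐 := fun t ht =>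
    subset_image_of_isMinimal_attracting 𝔹 hSadd hcont h𝓐c h𝓐attr h𝓐min ht
  have hfwd : ∀ t : ℝ, 0 ≤ t → S t '' 𝓐 ⊆ 𝓐 := fun t ht =>
    image_subset_of_subset_image hSadd hback h𝓐𝓑 (h𝓐attr 𝓑 h𝓑mem) ht
  ext x
  constructor
  · intro hx
    obtain ⟨xs, rfl, hxsA, hxs⟩ := exists_backward_orbit (hback 1 zero_le_one) hx
    exact ⟨trajectoryOfBackwardOrbit S xs,
      isCompleteTrajectory_trajectoryOfBackwardOrbit hSadd hxs,
      h𝔹incl 𝓑 h𝓑mem _ ((range_trajectoryOfBackwardOrbit_subset hfwd hxsA).trans h𝓐𝓑)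
        (range_nonempty _),
      trajectoryOfBackwardOrbit_zero hS0 xs⟩
  · rintro ⟨u, hu, hrange, rfl⟩
    refine (h𝓐attr _ hrange).mem_of_frequently_mem_image (Eventually.frequently ?_)
    filter_upwards [eventually_ge_atTop 0] with t ht using
      IsCompleteTrajectory.apply_zero_mem_image hu ht

/-- Representation formula for the attractor: if the bornology `𝔹` is stable under
inclusions, all maps `S(t)` are continuous, and there is a compact attracting set `𝓑`
which itself belongs to `𝔹`, then the attractor `𝓐` coincides with the set of values at
time `0` of all complete bounded trajectories. -/
theorem stmt_6 {Φ : Type*} [TopologicalSpace Φ] [T2Space Φ]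
    (S : ℝ → Φ → Φ)
    (hS0 : S 0 = id)
    (hSadd : ∀ t s : ℝ, 0 ≤ t → 0 ≤ s → S (t + s) = S t ∘ S s)
    (hcont : ∀ t : ℝ, 0 ≤ t → Continuous (S t))
    (𝔹 : Set (Set Φ)) (h𝔹 : ∀ B ∈ 𝔹, B.Nonempty)
    (h𝔹incl : ∀ B ∈ 𝔹, ∀ B₁ : Set Φ, B₁ ⊆ B → B₁.Nonempty → B₁ ∈ 𝔹)
    (𝓑 : Set Φ) (h𝓑 : IsCompact 𝓑) (h𝓑mem : 𝓑 ∈ 𝔹)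
    (hattr : ∀ B ∈ 𝔹, Attracts S 𝓑 B)
    (𝓐 : Set Φ)
    (h𝓐c : IsCompact 𝓐)
    (h𝓐attr : ∀ B ∈ 𝔹, Attracts S 𝓐 B)
    (h𝓐min : ∀ K : Set Φ, IsCompact K → (∀ B ∈ 𝔹, Attracts S K B) → 𝓐 ⊆ K) :
    𝓐 = {x : Φ | ∃ u : ℝ → Φ,
      (∀ t : ℝ, 0 ≤ t → ∀ h : ℝ, S t (u h) = u (t + h)) ∧
      Set.range u ∈ 𝔹 ∧ u 0 = x} :=
  stmt_6_general S hS0 hSadd hcont 𝔹 h𝔹incl 𝓑 h𝓑 h𝓑mem hattr 𝓐 h𝓐c h𝓐attr h𝓐min
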